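/- arXiv:2312.01541 — 5 statements merged into one kernel-verified Lean document; each statement's English description precedes it below -/
import Mathlib

section
/- Let n ≥ 2. The VC dimension of the hypothesis class of strict equality separators on ℝ^n — the class of Boolean-valued functions of the form x ↦ 1[w·x + b = 0] together with those of the form x ↦ 1[w·x + b ≠ 0], over all w ∈ ℝ^n and b ∈ ℝ — is exactly 2n + 1. -/
/-- Dot product of two vectors in ℝⁿ. -/
noncomputable def dotp {n : ℕ} (w x : Fin n → ℝ) : ℝ := ∑ i, w i * x i

/-- The class of strict equality separators on ℝⁿ: functions of the form
`x ↦ 1[w·x + b = 0]` together with those of the form `x ↦ 1[w·x + b ≠ 0]`. -/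
def strictEqSep (n : ℕ) : Set ((Fin n → ℝ) → Prop) :=
  {h | ∃ w : Fin n → ℝ, ∃ b : ℝ,
      h = (fun x => dotp w x + b = 0) ∨ h = (fun x => dotp w x + b ≠ 0)}

/-- A hypothesis class `H` shatters a finite set `S` if every labeling of `S`
is realized by some hypothesis in `H`. -/
def Shatters {n : ℕ} (H : Set ((Fin n → ℝ) → Prop)) (S : Finset (Fin n → ℝ)) : Prop :=
  ∀ f : (Fin n → ℝ) → Prop, ∃ h ∈ H, ∀ x ∈ S, (h x ↔ f x)

/-! Lifting `x ↦ (x, 1)` turns the zero set of `x ↦ w·x + b` into the kernel of a linear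
functional on `ℝⁿ × ℝ`, so for a labelling realized by a separator, the lifted positive or the
lifted negative points are closed under taking spans inside the lifted set `V`. But `2(n + 1)`
nonzero vectors in a space of dimension `n + 1` split into two parts each meeting the span of
the other: take a basis `B ⊆ V`; either `B` meets the span of `A = V \ B`, or `span A` is a proper
subspace, so `A` is dependent and one of its vectors can be moved over to `B`.

Conversely, any `m ≤ n` points of the moment curve `t ↦ (t, t², …, tⁿ)` form the exact zero set
of the affine functional read off the coefficients of `∏ (X - aᵢ)`, and in a labelling of
`2n + 1` such points either the positive or the negative ones number at most `n`. -/

open Submodule Finset Polynomial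

section SpanClosed

variable (K : Type*) {E : Type*} [Field K] [AddCommGroup E] [Module K E]

def IsSpanClosed (V T : Finset E) : Prop :=
  ∀ v ∈ V, v ∈ span K (T : Set E) → v ∈ T

variable {K}

lemma isSpanClosed_of_forall_apply_eq_zero_iff {V T : Finset E} (hTV : T ⊆ V) (φ : E →ₗ[K] K)
    (hφ : ∀ v ∈ V, φ v = 0 ↔ v ∈ T) : IsSpanClosed K V T := by
  intro v hv hvT
  have hker : span K (T : Set E) ≤ LinearMap.ker φ :=
    span_le.mpr fun t ht => (hφ t (hTV ht)).mpr ht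
  exact (hφ v hv).mp (hker hvT)

lemma nonempty_of_ne_zero_mem_span {s : Set E} {x : E} (hx : x ≠ 0) (hxs : x ∈ span K s) :
    s.Nonempty := by
  rw [Set.nonempty_iff_ne_empty]
  rintro rfl
  exact hx (by simpa using hxs)

lemma Finset.exists_subset_span_eq_card_eq_finrank (V : Finset E) :
    ∃ B ⊆ V, span K (B : Set E) = span K (V : Set E) ∧ B.card = (V : Set E).finrank K := by
  obtain ⟨B, hBV, hBspan, hBli⟩ := exists_linearIndependent K (V : Set E)
  obtain ⟨B, rfl⟩ := (V.finite_toSet.subset hBV).exists_finset_coe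
  exact ⟨B, mod_cast hBV, hBspan, by rw [Set.finrank, ← hBspan, finrank_span_finset_eq_card hBli]⟩

variable [DecidableEq E]

lemma not_isSpanClosed_sdiff_of_mem_span {V T : Finset E} (hV0 : 0 ∉ V) (hTV : T ⊆ V)
    (hV : ∀ v ∈ V, v ∈ span K ((V \ T : Finset E) : Set E)) {u : E} (hu : u ∈ V)
    (huT : u ∈ span K (T : Set E)) :
    ¬IsSpanClosed K V (V \ T) := by
  obtain ⟨t, ht⟩ := nonempty_of_ne_zero_mem_span (ne_of_mem_of_not_mem hu hV0) huT
  intro hclosed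
  exact (mem_sdiff.mp (hclosed t (hTV ht) (hV t (hTV ht)))).2 ht

lemma Finset.exists_mem_span_erase_of_finrank_lt_card {A : Finset E}
    (hA : (A : Set E).finrank K < A.card) :
    ∃ c ∈ A, c ∈ span K ((A.erase c : Finset E) : Set E) := by
  obtain ⟨C, hCA, hCspan, hCcard⟩ := A.exists_subset_span_eq_card_eq_finrank (K := K)
  obtain ⟨c, hcA, hcC⟩ := exists_mem_notMem_of_card_lt_card (hCcard ▸ hA)
  refine ⟨c, hcA, span_mono ?_ (hCspan ▸ subset_span hcA)⟩
  exact_mod_cast fun x hx => mem_erase.mpr ⟨by rintro rfl; exact hcC hx, hCA hx⟩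

theorem exists_not_isSpanClosed_and_not_isSpanClosed_sdiff {V : Finset E} (hV0 : 0 ∉ V)
    (hVne : V.Nonempty) (hcard : 2 * (V : Set E).finrank K ≤ V.card) :
    ∃ T ⊆ V, ¬IsSpanClosed K V T ∧ ¬IsSpanClosed K V (V \ T) := by
  obtain ⟨B, hBV, hBspan, hBcard⟩ := V.exists_subset_span_eq_card_eq_finrank (K := K)
  set A := V \ B
  have hAcard : A.card = V.card - B.card := card_sdiff_of_subset hBV
  have hV : ∀ T ⊆ A, ∀ v ∈ V, v ∈ span K ((V \ T : Finset E) : Set E) := by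
    intro T hTA v hv
    have hBT : B ⊆ V \ T :=
      fun b hb => mem_sdiff.mpr ⟨hBV hb, fun hbT => (mem_sdiff.mp (hTA hbT)).2 hb⟩
    exact span_mono (by exact_mod_cast hBT) (hBspan ▸ subset_span hv)
  by_cases hB : ∃ b ∈ B, b ∈ span K (A : Set E)
  · obtain ⟨b, hbB, hbA⟩ := hB
    refine ⟨A, sdiff_subset, fun hA => (mem_sdiff.mp (hA b (hBV hbB) hbA)).2 hbB,
      not_isSpanClosed_sdiff_of_mem_span hV0 sdiff_subset (hV A subset_rfl) (hBV hbB) hbA⟩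
  push Not at hB
  obtain ⟨v, hv⟩ := hVne
  obtain ⟨b, hbB⟩ := nonempty_of_ne_zero_mem_span (ne_of_mem_of_not_mem hv hV0)
    (hBspan ▸ subset_span hv : v ∈ span K (B : Set E))
  have hAlt : span K (A : Set E) < span K (V : Set E) :=
    lt_of_le_of_ne (span_mono (by simp [A])) fun h => hB b hbB (h ▸ hBspan ▸ subset_span hbB)
  have hAdep : (A : Set E).finrank K < A.card := by
    have := Submodule.finrank_lt_finrank_of_lt hAlt
    unfold Set.finrank at *
    omega
  obtain ⟨c, hcA, hcspan⟩ := exists_mem_span_erase_of_finrank_lt_card hAdep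
  refine ⟨A.erase c, (erase_subset c A).trans sdiff_subset,
    fun hA => notMem_erase c A (hA c (mem_sdiff.mp hcA).1 hcspan),
    not_isSpanClosed_sdiff_of_mem_span hV0 ((erase_subset c A).trans sdiff_subset)
      (hV _ (erase_subset c A)) (mem_sdiff.mp hcA).1 hcspan⟩

end SpanClosed

lemma exists_linearMap_apply_mk_one {n : ℕ} (w : Fin n → ℝ) (b : ℝ) :
    ∃ φ : ((Fin n → ℝ) × ℝ) →ₗ[ℝ] ℝ, ∀ x, φ (x, 1) = dotp w x + b :=
  ⟨(dotProductBilin ℝ ℝ w).coprod (b • LinearMap.id), fun x => by simp [dotp, dotProduct]⟩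

lemma Shatters.isSpanClosed_or_isSpanClosed_sdiff {n : ℕ} {S : Finset (Fin n → ℝ)}
    (hS : Shatters (strictEqSep n) S) {T : Finset ((Fin n → ℝ) × ℝ)}
    (hT : T ⊆ S.image (·, 1)) :
    IsSpanClosed ℝ (S.image (·, 1)) T ∨ IsSpanClosed ℝ (S.image (·, 1)) (S.image (·, 1) \ T) := by
  obtain ⟨h, ⟨w, b, rfl | rfl⟩, hag⟩ := hS fun x => (x, 1) ∈ T <;>
    obtain ⟨φ, hφ⟩ := exists_linearMap_apply_mk_one w b
  · refine .inl (isSpanClosed_of_forall_apply_eq_zero_iff hT φ ?_)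
    simp only [mem_image]
    rintro _ ⟨x, hx, rfl⟩
    rw [hφ]
    exact hag x hx
  · refine .inr (isSpanClosed_of_forall_apply_eq_zero_iff sdiff_subset φ ?_)
    simp only [mem_image]
    rintro _ ⟨x, hx, rfl⟩
    rw [hφ, mem_sdiff, ← hag x hx]
    simp [hx]

theorem card_le_of_shatters {n : ℕ} {S : Finset (Fin n → ℝ)} (hS : Shatters (strictEqSep n) S) :
    S.card ≤ 2 * n + 1 := by
  classical
  set V := S.image (·, (1 : ℝ))
  have hVS : V.card = S.card := card_image_of_injective _ fun x y h => congrArg Prod.fst h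
  have hV0 : (0 : (Fin n → ℝ) × ℝ) ∉ V := by simp [V]
  have hrank : (V : Set ((Fin n → ℝ) × ℝ)).finrank ℝ ≤ n + 1 :=
    (Submodule.finrank_le _).trans (by simp)
  by_contra! hcard
  obtain ⟨T, hTV, hT, hVT⟩ := exists_not_isSpanClosed_and_not_isSpanClosed_sdiff (K := ℝ) hV0
    (card_pos.mp (by omega)) (by omega)
  exact (hS.isSpanClosed_or_isSpanClosed_sdiff hTV).elim hT hVT

def momentCurve (n : ℕ) (t : ℝ) : Fin n → ℝ := fun i => t ^ ((i : ℕ) + 1)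

lemma momentCurve_injective {n : ℕ} (hn : 0 < n) : Function.Injective (momentCurve n) :=
  fun s t h => by simpa [momentCurve] using congrFun h ⟨0, hn⟩

lemma dotp_momentCurve_add_coeff_zero {n : ℕ} {q : ℝ[X]} (hq : q.natDegree ≤ n) (t : ℝ) :
    dotp (fun i => q.coeff ((i : ℕ) + 1)) (momentCurve n t) + q.coeff 0 = q.eval t := by
  rw [eval_eq_sum_range' (Nat.lt_succ_of_le hq), sum_range_succ', dotp,
    ← Fin.sum_univ_eq_sum_range (fun i => q.coeff (i + 1) * t ^ (i + 1)) n]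
  simp [momentCurve]

lemma exists_dotp_momentCurve_add_eq_zero_iff {n : ℕ} {A : Finset ℝ} (hA : A.card ≤ n) :
    ∃ w b, ∀ t, dotp w (momentCurve n t) + b = 0 ↔ t ∈ A := by
  set q : ℝ[X] := ∏ a ∈ A, (X - C a)
  have hq : q.natDegree ≤ n := by
    rwa [natDegree_prod _ _ fun a _ => X_sub_C_ne_zero a, sum_congr rfl fun a _ =>
      natDegree_X_sub_C a, sum_const, smul_eq_mul, mul_one]
  refine ⟨fun i => q.coeff ((i : ℕ) + 1), q.coeff 0, fun t => ?_⟩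
  rw [dotp_momentCurve_add_coeff_zero hq, eval_prod, prod_eq_zero_iff]
  simp [sub_eq_zero]

lemma shatters_image_momentCurve {n : ℕ} {P : Finset ℝ} (hP : P.card ≤ 2 * n + 1) :
    Shatters (strictEqSep n) (P.image (momentCurve n)) := by
  classical
  intro f
  have hsplit := P.card_filter_add_card_filter_not (f ∘ momentCurve n)
  simp only [forall_mem_image]
  by_cases hpos : (P.filter (f ∘ momentCurve n)).card ≤ n
  · obtain ⟨w, b, hwb⟩ := exists_dotp_momentCurve_add_eq_zero_iff hpos
    refine ⟨_, ⟨w, b, .inl rfl⟩, fun t ht => ?_⟩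
    simp [hwb, ht]
  · obtain ⟨w, b, hwb⟩ := exists_dotp_momentCurve_add_eq_zero_iff
      (show (P.filter fun t => ¬(f ∘ momentCurve n) t).card ≤ n by omega)
    refine ⟨_, ⟨w, b, .inr rfl⟩, fun t ht => ?_⟩
    simp [hwb, ht]

/-- For `n ≥ 2`, the VC dimension of the strict equality separator class on ℝⁿ is
exactly `2n + 1`: some set of `2n + 1` points is shattered, and no shattered set
has more than `2n + 1` points. -/
theorem vc_dim_strict_equality_separators (n : ℕ) (hn : 2 ≤ n) :
    (∃ S : Finset (Fin n → ℝ), S.card = 2 * n + 1 ∧ Shatters (strictEqSep n) S) ∧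
    (∀ S : Finset (Fin n → ℝ), Shatters (strictEqSep n) S → S.card ≤ 2 * n + 1) := by
  set P : Finset ℝ := (range (2 * n + 1)).image Nat.cast
  have hP : P.card = 2 * n + 1 := by
    rw [card_image_of_injective _ Nat.cast_injective, card_range]
  refine ⟨⟨P.image (momentCurve n), ?_, shatters_image_momentCurve hP.le⟩,
    fun S => card_le_of_shatters⟩
  rw [card_image_of_injective _ (momentCurve_injective (by omega)), hP]
end

section
/- Let n ≥ 2. There exists a set of 2n + 1 distinct points in ℝ^n that is shattered by the class of strict equality separators; consequently the VC dimension of this class is at least 2n + 1. -/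
/-- The moment curve `t ↦ (t, t², …, tⁿ)`. -/
noncomputable def phi (n : ℕ) (t : ℝ) : Fin n → ℝ := fun i => t ^ ((i : ℕ) + 1)

/-- Any set of at most `n` reals is exactly the zero set, along the moment curve,
of some affine functional. -/
lemma key (n : ℕ) (T : Finset ℝ) (hT : T.card ≤ n) :
    ∃ w : Fin n → ℝ, ∃ b : ℝ, ∀ t : ℝ, (dotp w (phi n t) + b = 0 ↔ t ∈ T) := by
  classical
  set p : Polynomial ℝ := ∏ s ∈ T, (Polynomial.X - Polynomial.C s) with hp
  have hdeg : p.natDegree ≤ n := by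
    have : p.natDegree = T.card := by
      rw [hp, Polynomial.natDegree_prod]
      · simp [Polynomial.natDegree_X_sub_C]
      · intro s _; exact Polynomial.X_sub_C_ne_zero s
    omega
  refine ⟨fun i => p.coeff ((i : ℕ) + 1), p.coeff 0, fun t => ?_⟩
  have heval : dotp (fun i => p.coeff ((i:ℕ) + 1)) (phi n t) + p.coeff 0 = p.eval t := by
    rw [Polynomial.eval_eq_sum_range' (lt_of_le_of_lt hdeg (Nat.lt_succ_self n)),
      Finset.sum_range_succ']
    simp [dotp, phi, Fin.sum_univ_eq_sum_range (fun i => p.coeff (i+1) * t ^ (i+1))]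
  rw [heval]
  simp [hp, Polynomial.eval_prod, Finset.prod_eq_zero_iff, sub_eq_zero, eq_comm]

/-- For `n ≥ 2`, there exists a set of `2n + 1` distinct points in ℝⁿ shattered by
the strict equality separator class; hence its VC dimension is at least `2n + 1`. -/
theorem vc_dim_strict_equality_separators_lower (n : ℕ) (hn : 2 ≤ n) :
    ∃ S : Finset (Fin n → ℝ), S.card = 2 * n + 1 ∧ Shatters (strictEqSep n) S := by
  classical
  have hφ : Function.Injective (fun k : ℕ => phi n (k : ℝ)) := by
    intro a b hab
    have h0 : (0 : ℕ) < n := by omega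
    have := congrFun hab ⟨0, h0⟩
    simp [phi] at this
    exact_mod_cast this
  refine ⟨(Finset.range (2*n+1)).image (fun k : ℕ => phi n (k:ℝ)), ?_, ?_⟩
  · rw [Finset.card_image_of_injective _ hφ, Finset.card_range]
  · intro f
    set T0 : Finset ℕ := (Finset.range (2*n+1)).filter (fun k : ℕ => f (phi n (k:ℝ))) with hT0
    by_cases hc : T0.card ≤ n
    · obtain ⟨w, b, hw⟩ := key n (T0.image (Nat.cast : ℕ → ℝ))
        (le_trans Finset.card_image_le hc)
      refine ⟨_, ⟨w, b, Or.inl rfl⟩, ?_⟩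
      intro x hx
      simp only [Finset.mem_image, Finset.mem_range] at hx
      obtain ⟨k, hk, rfl⟩ := hx
      show dotp w (phi n (k:ℝ)) + b = 0 ↔ f (phi n (k:ℝ))
      rw [hw]
      simp only [Finset.mem_image]
      constructor
      · rintro ⟨j, hj, hjk⟩
        have : j = k := Nat.cast_injective hjk
        subst this
        exact (Finset.mem_filter.mp hj).2
      · intro hf
        exact ⟨k, Finset.mem_filter.mpr ⟨Finset.mem_range.mpr hk, hf⟩, rfl⟩
    · set T1 := Finset.range (2*n+1) \ T0 with hT1
      have hcard : T1.card ≤ n := by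
        have h1 : T0 ⊆ Finset.range (2*n+1) := Finset.filter_subset _ _
        have := Finset.card_sdiff_of_subset h1
        rw [hT1, this, Finset.card_range]
        omega
      obtain ⟨w, b, hw⟩ := key n (T1.image (Nat.cast : ℕ → ℝ))
        (le_trans Finset.card_image_le hcard)
      refine ⟨_, ⟨w, b, Or.inr rfl⟩, ?_⟩
      intro x hx
      simp only [Finset.mem_image, Finset.mem_range] at hx
      obtain ⟨k, hk, rfl⟩ := hx
      show dotp w (phi n (k:ℝ)) + b ≠ 0 ↔ f (phi n (k:ℝ))
      have hiff : dotp w (phi n (k:ℝ)) + b = 0 ↔ (k:ℝ) ∈ T1.image (Nat.cast : ℕ → ℝ) := hw _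
      constructor
      · intro hne
        by_contra hf
        apply hne
        rw [hiff]
        refine Finset.mem_image.mpr ⟨k, ?_, rfl⟩
        rw [hT1, Finset.mem_sdiff]
        exact ⟨Finset.mem_range.mpr hk, fun hmem => hf (Finset.mem_filter.mp hmem).2⟩
      · intro hf heq
        rw [hiff] at heq
        obtain ⟨j, hj, hjk⟩ := Finset.mem_image.mp heq
        have : j = k := Nat.cast_injective hjk
        subst this
        rw [hT1, Finset.mem_sdiff] at hj
        exact hj.2 (Finset.mem_filter.mpr ⟨hj.1, hf⟩)
end

section
/- Let n ≥ 2. No set of 2n + 2 distinct points in ℝ^n is shattered by the class of strict equality separators: for any 2n + 2 distinct points x_1, …, x_{2n+2} ∈ ℝ^n there exists a labeling f : {x_1, …, x_{2n+2}} → {0,1} such that no function of the form x ↦ 1[w·x + b = 0] or x ↦ 1[w·x + b ≠ 0] (w ∈ ℝ^n, b ∈ ℝ) agrees with f on all 2n + 2 points. Consequently the VC dimension of the strict equality separator class is at most 2n + 1. -/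
/-! A strict equality separator is the indicator of an affine subspace `H` or of its complement.
So the labeling `(· ∈ B)` of `S` is not realized as soon as `A, B ⊆ S` are disjoint and each meets
the affine span of the other: `B ⊆ H` forces a point of `A` into `H`, and `A ⊆ H` forces a point
of `B` into `H`.

Such `A` and `B` exist once `#S ≥ 2d + 2`, where `d = dim (affineSpan S) ≤ n`. A subset `X` of at
least `d + 1` points either spans `affineSpan S` or has a point `x` in the span of `X \ {x}`; either
way it splits into disjoint `C, E` such that `affineSpan C` meets `Y ∪ E` for every nonempty
`Y ⊆ S`. Splitting a `(d + 1)`-point set `Q` and its complement `R` in this way, the crossed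
unions `A = C_R ∪ E_Q` and `B = C_Q ∪ E_R` work. -/

open Finset Module

section AffineSpace

variable {k V P : Type*} [DivisionRing k] [AddCommGroup V] [Module k V] [AddTorsor V P]

theorem Finset.affineSpan_eq_or_exists_mem_affineSpan_erase [DecidableEq P] {S X : Finset P}
    (hXS : X ⊆ S) (hX : finrank k (vectorSpan k (S : Set P)) + 1 ≤ #X) :
    affineSpan k (X : Set P) = affineSpan k (S : Set P) ∨
      ∃ x ∈ X, x ∈ affineSpan k (X.erase x : Set P) := by
  obtain ⟨T, hTX, hspan, hT⟩ := exists_affineIndependent k V (X : Set P)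
  by_cases hTX_eq : T = X
  · subst hTX_eq
    left
    have := finiteDimensional_vectorSpan_of_finite k S.finite_toSet
    have := finiteDimensional_direction_affineSpan_of_finite k S.finite_toSet
    have hcard :
        Fintype.card (X : Set P) = finrank k (affineSpan k (S : Set P)).direction + 1 := by
      have hX_le := hT.card_le_finrank_succ
      have hspan_le := Submodule.finrank_mono (vectorSpan_mono k (coe_subset.mpr hXS))
      rw [Subtype.range_coe] at hX_le
      rw [direction_affineSpan]
      simp only [coe_sort_coe, Fintype.card_coe] at hX_le ⊢
      omega
    simpa using hT.affineSpan_eq_of_le_of_card_eq_finrank_add_one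
      (by simpa using affineSpan_mono k (coe_subset.mpr hXS)) hcard
  · right
    obtain ⟨x, hxX, hxT⟩ := Set.exists_of_ssubset (hTX.ssubset_of_ne hTX_eq)
    refine ⟨x, hxX, affineSpan_mono k (fun y hy => ?_) (hspan ▸ mem_affineSpan k hxX)⟩
    exact mem_erase.mpr ⟨fun h => hxT (h ▸ hy), hTX hy⟩

theorem Finset.exists_split_affineSpan_meets [DecidableEq P] {S X : Finset P} (hXS : X ⊆ S)
    (hX : finrank k (vectorSpan k (S : Set P)) + 1 ≤ #X) :
    ∃ C ⊆ X, ∃ E ⊆ X, Disjoint C E ∧ C.Nonempty ∧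
      ∀ Y ⊆ S, Y.Nonempty → ∃ y ∈ Y ∪ E, y ∈ affineSpan k (C : Set P) := by
  rcases affineSpan_eq_or_exists_mem_affineSpan_erase hXS hX with hspan | ⟨x, hxX, hx⟩
  · refine ⟨X, subset_rfl, ∅, empty_subset _, disjoint_empty_right _,
      card_pos.mp (by omega), fun Y hYS ⟨y, hy⟩ => ⟨y, by simpa using hy, ?_⟩⟩
    exact hspan ▸ mem_affineSpan k (coe_subset.mpr hYS hy)
  · have hne : (X.erase x).Nonempty := by
      by_contra! h
      simp [h, AffineSubspace.notMem_bot] at hx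
    refine ⟨X.erase x, erase_subset _ _, {x}, singleton_subset_iff.mpr hxX, by simp, hne,
      fun Y _ _ => ⟨x, by simp, hx⟩⟩

theorem Finset.exists_disjoint_each_meets_affineSpan_other {S : Finset P}
    (hS : 2 * finrank k (vectorSpan k (S : Set P)) + 2 ≤ #S) :
    ∃ A ⊆ S, ∃ B ⊆ S, Disjoint A B ∧
      (∃ a ∈ A, a ∈ affineSpan k (B : Set P)) ∧ ∃ b ∈ B, b ∈ affineSpan k (A : Set P) := by
  classical
  obtain ⟨Q, hQS, hQ⟩ :=
    exists_subset_card_eq (show finrank k (vectorSpan k (S : Set P)) + 1 ≤ #S by omega)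
  have hR : finrank k (vectorSpan k (S : Set P)) + 1 ≤ #(S \ Q) := by
    rw [card_sdiff_of_subset hQS]; omega
  obtain ⟨CQ, hCQ, EQ, hEQ, hCEQ, hCQne, hQmeets⟩ := exists_split_affineSpan_meets hQS hQ.ge
  obtain ⟨CR, hCR, ER, hER, hCER, hCRne, hRmeets⟩ := exists_split_affineSpan_meets sdiff_subset hR
  have hQR : Disjoint Q (S \ Q) := disjoint_sdiff
  refine ⟨CR ∪ EQ, ?_, CQ ∪ ER, ?_, ?_, ?_, ?_⟩
  · exact union_subset (hCR.trans sdiff_subset) (hEQ.trans hQS)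
  · exact union_subset (hCQ.trans hQS) (hER.trans sdiff_subset)
  · simp only [disjoint_union_left, disjoint_union_right]
    exact ⟨⟨hQR.symm.mono hCR hCQ, hCEQ.symm⟩, hCER, hQR.mono hEQ hER⟩
  · obtain ⟨a, ha, haC⟩ := hQmeets CR (hCR.trans sdiff_subset) hCRne
    exact ⟨a, ha, affineSpan_mono k (by simp) haC⟩
  · obtain ⟨b, hb, hbC⟩ := hRmeets CQ (hCQ.trans hQS) hCQne
    exact ⟨b, hb, affineSpan_mono k (by simp) hbC⟩

end AffineSpace

section Labeling

variable {k V P : Type*} [Ring k] [AddCommGroup V] [Module k V] [AddTorsor V P]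
  {S A B : Finset P}

theorem exists_not_mem_iff_of_mem_affineSpan (hAS : A ⊆ S) (hBS : B ⊆ S) (hAB : Disjoint A B)
    (hA : ∃ a ∈ A, a ∈ affineSpan k (B : Set P)) (H : AffineSubspace k P) :
    ∃ x ∈ S, ¬(x ∈ H ↔ x ∈ B) := by
  by_contra! hH
  obtain ⟨a, haA, haB⟩ := hA
  have hBH : affineSpan k (B : Set P) ≤ H := affineSpan_le.mpr fun b hb => (hH b (hBS hb)).mpr hb
  exact disjoint_left.mp hAB haA ((hH a (hAS haA)).mp (hBH haB))

theorem exists_not_notMem_iff_of_mem_affineSpan (hAS : A ⊆ S) (hBS : B ⊆ S) (hAB : Disjoint A B)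
    (hB : ∃ b ∈ B, b ∈ affineSpan k (A : Set P)) (H : AffineSubspace k P) :
    ∃ x ∈ S, ¬(x ∉ H ↔ x ∈ B) := by
  by_contra! hH
  obtain ⟨b, hbB, hbA⟩ := hB
  have hAH : affineSpan k (A : Set P) ≤ H := affineSpan_le.mpr fun a ha =>
    not_not.mp fun haH => disjoint_left.mp hAB ha ((hH a (hAS ha)).mp haH)
  exact (hH b (hBS hbB)).mpr hbB (hAH hbA)

end Labeling

theorem exists_affineSubspace_of_mem_strictEqSep {n : ℕ} {h : (Fin n → ℝ) → Prop}
    (hh : h ∈ strictEqSep n) :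
    ∃ H : AffineSubspace ℝ (Fin n → ℝ), h = (· ∈ H) ∨ h = (· ∉ H) := by
  obtain ⟨w, b, hh⟩ := hh
  let H := (affineSpan ℝ {-b}).comap (dotProductBilin ℝ ℝ w).toAffineMap
  have hH : ∀ x, x ∈ H ↔ dotp w x + b = 0 := fun x => by
    simp [H, AffineSubspace.mem_comap, eq_neg_iff_add_eq_zero, dotp, dotProduct]
  exact ⟨H, by simpa only [hH] using hh⟩

theorem exists_labeling_forall_mem_strictEqSep_not_realized {n : ℕ} {S : Finset (Fin n → ℝ)}
    (hS : 2 * n + 2 ≤ #S) :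
    ∃ f : (Fin n → ℝ) → Prop, ∀ h ∈ strictEqSep n, ∃ x ∈ S, ¬(h x ↔ f x) := by
  have hdim : finrank ℝ (vectorSpan ℝ (S : Set (Fin n → ℝ))) ≤ n :=
    (Submodule.finrank_le _).trans_eq (finrank_fin_fun ℝ)
  obtain ⟨A, hAS, B, hBS, hAB, hA, hB⟩ :=
    exists_disjoint_each_meets_affineSpan_other (k := ℝ) (S := S) (by omega)
  refine ⟨(· ∈ B), fun h hh => ?_⟩
  obtain ⟨H, rfl | rfl⟩ := exists_affineSubspace_of_mem_strictEqSep hh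
  · exact exists_not_mem_iff_of_mem_affineSpan hAS hBS hAB hA H
  · exact exists_not_notMem_iff_of_mem_affineSpan hAS hBS hAB hB H

theorem vc_dim_strict_equality_separators_upper_general (n : ℕ) :
    (∀ S : Finset (Fin n → ℝ), S.card = 2 * n + 2 →
      ∃ f : (Fin n → ℝ) → Prop, ∀ h ∈ strictEqSep n, ∃ x ∈ S, ¬ (h x ↔ f x)) ∧
    (∀ S : Finset (Fin n → ℝ), Shatters (strictEqSep n) S → S.card ≤ 2 * n + 1) := by
  refine ⟨fun S hS => exists_labeling_forall_mem_strictEqSep_not_realized hS.ge, fun S hS => ?_⟩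
  by_contra! hS_card
  obtain ⟨f, hf⟩ := exists_labeling_forall_mem_strictEqSep_not_realized hS_card
  obtain ⟨h, hh, h_agree⟩ := hS f
  obtain ⟨x, hxS, hx⟩ := hf h hh
  exact hx (h_agree x hxS)

/-- For `n ≥ 2`, no set of `2n + 2` distinct points in ℝⁿ is shattered by the strict
equality separator class: there is a labeling that no strict equality separator
realizes.  Consequently every shattered set has at most `2n + 1` points. -/
theorem vc_dim_strict_equality_separators_upper (n : ℕ) (hn : 2 ≤ n) :
    (∀ S : Finset (Fin n → ℝ), S.card = 2 * n + 2 →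
      ∃ f : (Fin n → ℝ) → Prop, ∀ h ∈ strictEqSep n, ∃ x ∈ S, ¬ (h x ↔ f x)) ∧
    (∀ S : Finset (Fin n → ℝ), Shatters (strictEqSep n) S → S.card ≤ 2 * n + 1) :=
  vc_dim_strict_equality_separators_upper_general n
end

section
/- Let n ≥ 1, let k ≤ n, and let H_1, …, H_k be closed halfspaces in ℝ^n, i.e. sets of the form {x ∈ ℝ^n : w_i·x + b_i ≥ 0} with w_i ∈ ℝ^n and b_i ∈ ℝ. Then the intersection ⋂_{i=1}^k H_i has Lebesgue measure either 0 or ∞; equivalently, if an intersection of closed halfspaces in ℝ^n has positive finite Lebesgue measure, then it involves at least n + 1 halfspaces. -/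
open MeasureTheory Module

/-!
Some nonzero direction `v` satisfies `wᵢ · v ≥ 0` for all `i`: if the `k ≤ n` functionals `wᵢ`
have a common nonzero kernel vector take it, and otherwise `k = n` and `v` can be chosen with
`wᵢ · v = 1`. The intersection is then closed under `x ↦ x + v`. Slice it into the level sets
of `⌊ℓ x⌋` for a linear `ℓ` with `ℓ v = 1`: translation by `v` maps each slice into the next, so
by translation invariance the slice volumes are nondecreasing. Either every slice is null, or
infinitely many disjoint slices have volume at least that of a non-null one.
-/

section ZeroOrTop

variable {G : Type*} [AddGroup G] [MeasurableSpace G] [MeasurableAdd G] {μ : Measure G}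
  [μ.IsAddRightInvariant] {s : Set G} {v : G}

theorem measure_eq_zero_or_top_of_add_mem_of_level (hs : MeasurableSet s)
    (hsv : ∀ x ∈ s, x + v ∈ s) (f : G → ℤ) (hf : Measurable f) (hfv : ∀ x, f (x + v) = f x + 1) :
    μ s = 0 ∨ μ s = ⊤ := by
  set A : ℤ → Set G := fun j => s ∩ f ⁻¹' {j}
  have hA_succ (j : ℤ) : μ (A j) ≤ μ (A (j + 1)) := calc
    μ (A j) ≤ μ ((· + v) ⁻¹' A (j + 1)) :=
      measure_mono fun x hx => show x + v ∈ A (j + 1) from ⟨hsv x hx.1, by simp_all [A]⟩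
    _ = μ (A (j + 1)) := measure_preimage_add_right μ v _
  refine or_iff_not_imp_left.2 fun hs0 => ?_
  obtain ⟨j₀, hj₀⟩ : ∃ j, μ (A j) ≠ 0 := by
    by_contra! h
    have hs_cover : s ⊆ ⋃ j, A j := fun x hx => Set.mem_iUnion.2 ⟨f x, hx, rfl⟩
    exact hs0 (measure_mono_null hs_cover (measure_iUnion_null h))
  have hA_ge (m : ℕ) : μ (A j₀) ≤ μ (A (j₀ + m)) := by
    induction m with
    | zero => simp
    | succ m ih => exact ih.trans (by simpa [add_assoc] using hA_succ (j₀ + m))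
  have hA_disj : Pairwise (Function.onFun Disjoint fun m : ℕ => A (j₀ + m)) :=
    fun m m' hm => Set.disjoint_left.2 fun x hx hx' => hm (by
      have := hx.2.symm.trans hx'.2
      omega)
  refine eq_top_iff.2 ?_
  calc ⊤ = ∑' _ : ℕ, μ (A j₀) := (ENNReal.tsum_const_eq_top_of_ne_zero hj₀).symm
    _ ≤ ∑' m : ℕ, μ (A (j₀ + m)) := ENNReal.tsum_le_tsum hA_ge
    _ = μ (⋃ m : ℕ, A (j₀ + m)) :=
      (measure_iUnion hA_disj fun m => hs.inter (hf (measurableSet_singleton _))).symm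
    _ ≤ μ s := measure_mono (Set.iUnion_subset fun _ => Set.inter_subset_left)

end ZeroOrTop

theorem measure_eq_zero_or_top_of_add_mem {E : Type*} [NormedAddCommGroup E] [NormedSpace ℝ E]
    [MeasurableSpace E] [BorelSpace E] (μ : Measure E) [μ.IsAddRightInvariant] {s : Set E}
    (hs : MeasurableSet s) {v : E} (hv : v ≠ 0) (hsv : ∀ x ∈ s, x + v ∈ s) :
    μ s = 0 ∨ μ s = ⊤ := by
  obtain ⟨ℓ, -, hℓv⟩ := exists_dual_vector ℝ v (norm_ne_zero_iff.2 hv)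
  have hℓv₀ : ℓ v ≠ 0 := by simpa [hℓv] using hv
  refine measure_eq_zero_or_top_of_add_mem_of_level hs hsv (fun x => ⌊ℓ x / ℓ v⌋)
    (by fun_prop) fun x => ?_
  simp [add_div, div_self hℓv₀]

theorem LinearMap.exists_ne_zero_nonneg_apply {𝕜 E ι : Type*} [Field 𝕜] [LinearOrder 𝕜]
    [IsOrderedRing 𝕜] [AddCommGroup E] [Module 𝕜 E] [FiniteDimensional 𝕜 E] [Nontrivial E]
    [Fintype ι] (L : E →ₗ[𝕜] ι → 𝕜) (hι : Fintype.card ι ≤ finrank 𝕜 E) :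
    ∃ v, v ≠ 0 ∧ 0 ≤ L v := by
  by_cases hker : LinearMap.ker L = ⊥
  · have hrank : finrank 𝕜 E = finrank 𝕜 (ι → 𝕜) := by
      refine le_antisymm (LinearMap.finrank_le_finrank_of_injective (f := L) ?_) (by simpa using hι)
      exact LinearMap.ker_eq_bot.1 hker
    obtain ⟨v, hv⟩ := (LinearMap.injective_iff_surjective_of_finrank_eq_finrank hrank).1
      (LinearMap.ker_eq_bot.1 hker) 1
    have : Nonempty ι := by
      rw [← Fintype.card_pos_iff]
      simpa [hrank] using finrank_pos (R := 𝕜) (M := E)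
    exact ⟨v, by rintro rfl; simp at hv, hv ▸ zero_le_one⟩
  · obtain ⟨v, hv, hv0⟩ := Submodule.exists_mem_ne_zero_of_ne_bot hker
    exact ⟨v, hv0, (LinearMap.mem_ker.1 hv).ge⟩

/-- For `k ≤ n`, the intersection of `k` closed halfspaces
`{x : wᵢ·x + bᵢ ≥ 0}` in ℝⁿ has Lebesgue measure either 0 or ∞: an intersection
of closed halfspaces of positive finite volume needs at least `n + 1` halfspaces. -/
theorem few_halfspaces_zero_or_infinite_volume (n k : ℕ) (hn : 1 ≤ n) (hk : k ≤ n)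
    (w : Fin k → (Fin n → ℝ)) (b : Fin k → ℝ) :
    volume (⋂ i, {x : Fin n → ℝ | 0 ≤ dotp (w i) x + b i}) = 0 ∨
    volume (⋂ i, {x : Fin n → ℝ | 0 ≤ dotp (w i) x + b i}) = ⊤ := by
  have : Nonempty (Fin n) := ⟨⟨0, hn⟩⟩
  obtain ⟨v, hv0, hv⟩ := (Matrix.of w).mulVecLin.exists_ne_zero_nonneg_apply (by simpa using hk)
  refine measure_eq_zero_or_top_of_add_mem volume
    (MeasurableSet.iInter fun i => measurableSet_le (by fun_prop) (by unfold dotp; fun_prop))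
    hv0 fun x hx => ?_
  simp only [Set.mem_iInter, Set.mem_ofPred_eq] at hx ⊢
  intro i
  have hvi : 0 ≤ dotp (w i) v := hv i
  simp only [dotp, Pi.add_apply, mul_add, Finset.sum_add_distrib] at hx hvi ⊢
  linarith [hx i]
end

section
/- Let n ≥ 1. The closing number of the class of closed halfspaces on ℝ^n is n + 1: there exist n + 1 closed halfspaces in ℝ^n whose intersection has positive finite Lebesgue measure (for instance the n halfspaces {x : x_i ≥ 0} together with {x : 1 − Σ_i x_i ≥ 0}, whose intersection is the standard n-simplex), and no intersection of at most n closed halfspaces in ℝ^n has positive finite Lebesgue measure. -/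
open MeasureTheory

/-!
The simplex `{x | 0 ≤ x, ∑ xⱼ ≤ 1}` is cut out by `n + 1` halfspaces and lies between the cubes
`[0, 1/n]ⁿ` and `[0, 1]ⁿ`. Conversely, `k ≤ n` linear functionals always have a common
nonnegative direction `v ≠ 0`: a common kernel vector, or, when they form a basis, the preimage of
`(1, …, 1)`. The intersection `S` of the halfspaces is then convex and stable under
`x ↦ x + t • v` for `t ≥ 0`. If `μ S > 0`, convexity gives a ball inside `S`, and sliding it along
the ray produces infinitely many disjoint balls of equal measure inside `S`, so `μ S = ∞`.
-/

open Metric Module Set Function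
open scoped Pointwise

section Halfspaces

variable {E ι : Type*} [AddCommGroup E] [Module ℝ E]

theorem convex_iInter_halfspaces (f : ι → Dual ℝ E) (b : ι → ℝ) :
    Convex ℝ (⋂ i, {x | 0 ≤ f i x + b i}) :=
  convex_iInter fun i => by
    simpa only [neg_le_iff_add_nonneg] using convex_halfSpace_ge (f i).isLinear (-b i)

theorem add_smul_mem_iInter_halfspaces {f : ι → Dual ℝ E} {b : ι → ℝ} {v x : E}
    (hv : ∀ i, 0 ≤ f i v) (hx : x ∈ ⋂ i, {x | 0 ≤ f i x + b i}) {t : ℝ} (ht : 0 ≤ t) :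
    x + t • v ∈ ⋂ i, {x | 0 ≤ f i x + b i} := by
  simp only [mem_iInter, mem_ofPred_eq, map_add, map_smul, smul_eq_mul] at hx ⊢
  exact fun i => by linarith [hx i, mul_nonneg ht (hv i)]

theorem exists_ne_zero_forall_nonneg_apply [FiniteDimensional ℝ E] [Fintype ι]
    (f : ι → Dual ℝ E) (hcard : Fintype.card ι ≤ finrank ℝ E) (hE : 0 < finrank ℝ E) :
    ∃ v ≠ 0, ∀ i, 0 ≤ f i v := by
  by_cases hker : LinearMap.ker (LinearMap.pi f) = ⊥
  · have hinj := LinearMap.ker_eq_bot.mp hker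
    have hrank : finrank ℝ E = finrank ℝ (ι → ℝ) :=
      (LinearMap.finrank_le_finrank_of_injective hinj).antisymm (by simpa using hcard)
    obtain ⟨v, hv⟩ :=
      (LinearMap.injective_iff_surjective_of_finrank_eq_finrank hrank).mp hinj fun _ => 1
    rw [finrank_fintype_fun_eq_card] at hrank
    have : Nonempty ι := Fintype.card_pos_iff.mp (hrank ▸ hE)
    refine ⟨v, ?_, fun i => ?_⟩
    · rintro rfl
      simpa using congrFun hv (Classical.arbitrary ι)
    · rw [← LinearMap.pi_apply f v i, hv]
      exact zero_le_one
  · obtain ⟨v, hv, hv0⟩ := Submodule.exists_mem_ne_zero_of_ne_bot hker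
    exact ⟨v, hv0, fun i => (congrFun (LinearMap.mem_ker.mp hv) i).ge⟩

end Halfspaces

section Measure

variable {E : Type*} [NormedAddCommGroup E] [NormedSpace ℝ E] [MeasurableSpace E] [BorelSpace E]
  (μ : Measure E)

theorem Convex.interior_nonempty_of_measure_ne_zero [FiniteDimensional ℝ E] [μ.IsAddHaarMeasure]
    {s : Set E} (hs : Convex ℝ s) (hμ : μ s ≠ 0) : (interior s).Nonempty := by
  by_contra hint
  refine hμ (measure_mono_null (fun x hx => ?_) (hs.addHaar_frontier μ))
  simpa [frontier, not_nonempty_iff_eq_empty.mp hint] using subset_closure hx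

theorem measure_eq_top_of_add_smul_mem [μ.IsAddLeftInvariant] [μ.IsOpenPosMeasure] {s : Set E}
    (hs : (interior s).Nonempty) {v : E} (hv : v ≠ 0)
    (hsv : ∀ x ∈ s, ∀ t : ℝ, 0 ≤ t → x + t • v ∈ s) : μ s = ⊤ := by
  obtain ⟨x, hx⟩ := hs
  obtain ⟨ε, hε, hball⟩ := Metric.isOpen_iff.mp isOpen_interior x hx
  -- consecutive centres are `2 * ε` apart
  set r := 2 * ε / ‖v‖
  let B : ℕ → Set E := fun m => ((m * r) • v) +ᵥ ball x ε
  have hBs : ∀ m, B m ⊆ s := by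
    rintro m _ ⟨y, hy, rfl⟩
    show (m * r) • v + y ∈ s
    rw [add_comm]
    exact hsv y (interior_subset (hball hy)) _ (by positivity)
  have hBdisj : Pairwise (Disjoint on B) := by
    refine (pairwise_disjoint_on B).mpr fun m m' hmm' => ?_
    simp only [B, vadd_ball]
    refine ball_disjoint_ball ?_
    have : ((m + 1 : ℕ) : ℝ) ≤ m' := by exact_mod_cast hmm'
    push_cast at this
    rw [dist_eq_norm, vadd_eq_add, vadd_eq_add, add_sub_add_right_eq_sub, ← sub_smul, norm_smul,
      ← sub_mul, Real.norm_eq_abs, abs_mul, abs_of_nonpos (by linarith), abs_of_pos (by positivity),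
      mul_assoc, div_mul_cancel₀ _ (norm_ne_zero_iff.mpr hv)]
    nlinarith
  refine top_le_iff.mp ?_
  calc ⊤ = ∑' m, μ (B m) := by
        simp only [B, measure_vadd]
        exact (ENNReal.tsum_const_eq_top_of_ne_zero (measure_ball_pos μ x hε).ne').symm
    _ = μ (⋃ m, B m) := (measure_iUnion hBdisj fun m => measurableSet_ball.const_vadd _).symm
    _ ≤ μ s := measure_mono (iUnion_subset hBs)

theorem measure_iInter_halfspaces_eq_zero_or_top {ι : Type*} [Fintype ι] [FiniteDimensional ℝ E]
    [μ.IsAddHaarMeasure] (f : ι → Dual ℝ E) (b : ι → ℝ) (hcard : Fintype.card ι ≤ finrank ℝ E)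
    (hE : 0 < finrank ℝ E) :
    μ (⋂ i, {x | 0 ≤ f i x + b i}) = 0 ∨ μ (⋂ i, {x | 0 ≤ f i x + b i}) = ⊤ := by
  obtain ⟨v, hv0, hv⟩ := exists_ne_zero_forall_nonneg_apply f hcard hE
  refine or_iff_not_imp_left.mpr fun hμ => measure_eq_top_of_add_smul_mem μ ?_ hv0
    fun x hx t ht => add_smul_mem_iInter_halfspaces hv hx ht
  exact (convex_iInter_halfspaces f b).interior_nonempty_of_measure_ne_zero μ hμ

end Measure

section Simplex

variable (n : ℕ)

def simplexNormal : Fin (n + 1) → Fin n → ℝ := Fin.snoc (fun j => Pi.single j 1) fun _ => -1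

def simplexOffset : Fin (n + 1) → ℝ := Fin.snoc (α := fun _ => ℝ) 0 1

theorem iInter_simplex_halfspaces :
    ⋂ i, {x | 0 ≤ dotp (simplexNormal n i) x + simplexOffset n i} =
      {x | (∀ j, 0 ≤ x j) ∧ ∑ j, x j ≤ 1} := by
  ext x
  simp [simplexNormal, simplexOffset, Fin.forall_fin_succ', dotp, Pi.single_apply, neg_add_eq_sub]

variable {n}

theorem volume_simplex_pos (hn : 1 ≤ n) :
    0 < volume {x : Fin n → ℝ | (∀ j, 0 ≤ x j) ∧ ∑ j, x j ≤ 1} := by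
  have hcube : Icc 0 (fun _ => (n : ℝ)⁻¹) ⊆ {x : Fin n → ℝ | (∀ j, 0 ≤ x j) ∧ ∑ j, x j ≤ 1} :=
    fun x hx => ⟨hx.1, (Finset.sum_le_sum fun j _ => hx.2 j).trans (by simp [mul_inv_le_one])⟩
  refine lt_of_lt_of_le ?_ (measure_mono hcube)
  simpa [Real.volume_Icc_pi] using
    ENNReal.pow_pos (ENNReal.ofReal_pos.mpr (inv_pos.mpr (Nat.cast_pos.mpr hn))) n

theorem volume_simplex_lt_top : volume {x : Fin n → ℝ | (∀ j, 0 ≤ x j) ∧ ∑ j, x j ≤ 1} < ⊤ := by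
  refine ((isBounded_Icc (0 : Fin n → ℝ) 1).subset fun x hx => ⟨hx.1, fun j => ?_⟩).measure_lt_top
  exact (Finset.single_le_sum (fun i _ => hx.1 i) (Finset.mem_univ j)).trans hx.2

end Simplex

/-- For `n ≥ 1`, the closing number of the class of closed halfspaces on ℝⁿ is
`n + 1`: there exist `n + 1` closed halfspaces whose intersection has positive
finite Lebesgue measure, while no family of at most `n` closed halfspaces has an
intersection of positive finite Lebesgue measure. -/
theorem closing_number_halfspaces (n : ℕ) (hn : 1 ≤ n) :
    (∃ w : Fin (n + 1) → (Fin n → ℝ), ∃ b : Fin (n + 1) → ℝ,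
      0 < volume (⋂ i, {x : Fin n → ℝ | 0 ≤ dotp (w i) x + b i}) ∧
      volume (⋂ i, {x : Fin n → ℝ | 0 ≤ dotp (w i) x + b i}) < ⊤) ∧
    (∀ k : ℕ, k ≤ n → ∀ w : Fin k → (Fin n → ℝ), ∀ b : Fin k → ℝ,
      ¬ (0 < volume (⋂ i, {x : Fin n → ℝ | 0 ≤ dotp (w i) x + b i}) ∧
         volume (⋂ i, {x : Fin n → ℝ | 0 ≤ dotp (w i) x + b i}) < ⊤)) := by
  refine ⟨⟨simplexNormal n, simplexOffset n, ?_⟩, fun k hk w b => ?_⟩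
  · rw [iInter_simplex_halfspaces]
    exact ⟨volume_simplex_pos hn, volume_simplex_lt_top⟩
  · rintro ⟨hpos, hfin⟩
    rcases measure_iInter_halfspaces_eq_zero_or_top volume
        (fun i => dotProductEquiv ℝ (Fin n) (w i)) b (by rwa [Fintype.card_fin, finrank_fin_fun])
        (by rwa [finrank_fin_fun]) with h | h
    · exact hpos.ne' h
    · exact hfin.ne h
end
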